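/- In the Efficiency-Bayesian Mask Game, if a·(1-b)·ρ·(1-ρ) < C_use/C_i < a·ρ·(1-ρ), then (no, use) and (use, no) are pure-strategy Nash equilibria, while neither (no,no) nor (use,use) is. -/

import Mathlib

/-!
Write `K = ρ (1 - ρ) Ci` for the expected infection cost. Against an opponent who wears a mask,
switching from `no` to `use` saves `a (1 - b) K` at the price `Cuse`; against one who does not, it
saves `a K`. So in the regime `a (1 - b) K < Cuse < a K` each player wants to do the opposite of
the other: the two anti-coordinated profiles are equilibria and the two coordinated ones are not.
-/

inductive BStrat | no | use
deriving DecidableEq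

noncomputable def ecost (a b ρ Cuse Ci : ℝ) : BStrat → BStrat → ℝ
  | .no, .no => ρ * (1 - ρ) * Ci
  | .no, .use => (1 - b) * (ρ * (1 - ρ) * Ci)
  | .use, .no => (1 - a) * (ρ * (1 - ρ) * Ci) + Cuse
  | .use, .use => Cuse + (1 - a) * (1 - b) * (ρ * (1 - ρ) * Ci)

def effNE (a b ρ Cuse Ci : ℝ) (s1 s2 : BStrat) : Prop :=
  (∀ t : BStrat, ecost a b ρ Cuse Ci s1 s2 ≤ ecost a b ρ Cuse Ci t s2) ∧
  (∀ t : BStrat, ecost a b ρ Cuse Ci s2 s1 ≤ ecost a b ρ Cuse Ci t s1)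

theorem BStrat.forall {P : BStrat → Prop} : (∀ t, P t) ↔ P .no ∧ P .use :=
  ⟨fun h => ⟨h .no, h .use⟩, fun ⟨hno, huse⟩ t => by cases t <;> assumption⟩

section PureEquilibria

variable {a b ρ Cuse Ci : ℝ}

theorem effNE_comm {s₁ s₂ : BStrat} :
    effNE a b ρ Cuse Ci s₁ s₂ ↔ effNE a b ρ Cuse Ci s₂ s₁ :=
  And.comm

theorem effNE_no_use_iff :
    effNE a b ρ Cuse Ci .no .use ↔
      a * (1 - b) * (ρ * (1 - ρ) * Ci) ≤ Cuse ∧ Cuse ≤ a * (ρ * (1 - ρ) * Ci) := by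
  simp only [effNE, BStrat.forall, ecost, le_refl, true_and, and_true]
  constructor <;> rintro ⟨h₁, h₂⟩ <;> constructor <;> linarith

theorem effNE_no_no_iff :
    effNE a b ρ Cuse Ci .no .no ↔ a * (ρ * (1 - ρ) * Ci) ≤ Cuse := by
  simp only [effNE, BStrat.forall, ecost, le_refl, true_and, and_self]
  constructor <;> intro h <;> linarith

theorem effNE_use_use_iff :
    effNE a b ρ Cuse Ci .use .use ↔ Cuse ≤ a * (1 - b) * (ρ * (1 - ρ) * Ci) := by
  simp only [effNE, BStrat.forall, ecost, le_refl, and_true, and_self]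
  constructor <;> intro h <;> linarith

end PureEquilibria

theorem eff_bayesian_mixed_profiles_NE_general (a b ρ Cuse Ci : ℝ)
    (hCi : 0 < Ci)
    (hlo : a * (1 - b) * (ρ * (1 - ρ)) < Cuse / Ci)
    (hhi : Cuse / Ci < a * (ρ * (1 - ρ))) :
    effNE a b ρ Cuse Ci .no .use ∧ effNE a b ρ Cuse Ci .use .no ∧
    ¬ effNE a b ρ Cuse Ci .no .no ∧ ¬ effNE a b ρ Cuse Ci .use .use := by
  have hlo' : a * (1 - b) * (ρ * (1 - ρ) * Ci) < Cuse := by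
    rw [← mul_assoc]; exact (lt_div_iff₀ hCi).1 hlo
  have hhi' : Cuse < a * (ρ * (1 - ρ) * Ci) := by
    rw [← mul_assoc]; exact (div_lt_iff₀ hCi).1 hhi
  have hNE : effNE a b ρ Cuse Ci .no .use := effNE_no_use_iff.2 ⟨hlo'.le, hhi'.le⟩
  exact ⟨hNE, effNE_comm.1 hNE, fun h => (effNE_no_no_iff.1 h).not_gt hhi',
    fun h => (effNE_use_use_iff.1 h).not_gt hlo'⟩

/-- In the intermediate regime, (no, use) and (use, no) are the pure NEs,
while neither (no, no) nor (use, use) is a NE. -/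
theorem eff_bayesian_mixed_profiles_NE (a b ρ Cuse Ci : ℝ)
    (ha : a ∈ Set.Ioc (0:ℝ) 1) (hb : b ∈ Set.Ico (0:ℝ) 1)
    (hρ : ρ ∈ Set.Ioo (0:ℝ) 1) (hCuse : 0 < Cuse) (hCi : 0 < Ci)
    (hlo : a * (1 - b) * (ρ * (1 - ρ)) < Cuse / Ci)
    (hhi : Cuse / Ci < a * (ρ * (1 - ρ))) :
    effNE a b ρ Cuse Ci .no .use ∧ effNE a b ρ Cuse Ci .use .no ∧
    ¬ effNE a b ρ Cuse Ci .no .no ∧ ¬ effNE a b ρ Cuse Ci .use .use :=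
  eff_bayesian_mixed_profiles_NE_general a b ρ Cuse Ci hCi hlo hhi
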